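/- Let N = p_1^{n_1} ··· p_a^{n_a} with a ≥ 2, and suppose it is not the case that (N ≡ 2 mod 4 and n_i ≤ 2 for all i with p_i odd). Then box(Γ(Z_N)) = a. -/

import Mathlib

def IsIntervalGraph {V : Type*} (G : SimpleGraph V) : Prop :=
  ∃ a b : V → ℝ, ∀ u v : V, u ≠ v →
    (G.Adj u v ↔ (Set.Icc (a u) (b u) ∩ Set.Icc (a v) (b v)).Nonempty)

def IsThresholdGraph {V : Type*} (G : SimpleGraph V) : Prop :=
  ∃ (w : V → ℝ) (S : ℝ), ∀ u v : V, u ≠ v → (G.Adj u v ↔ S ≤ w u + w v)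

noncomputable def boxicity {V : Type*} (G : SimpleGraph V) : ℕ :=
  sInf {d : ℕ | ∃ I : Fin d → SimpleGraph V, (∀ i, IsIntervalGraph (I i)) ∧
    ∀ u v : V, G.Adj u v ↔ (u ≠ v ∧ ∀ i, (I i).Adj u v)}

noncomputable def thresholdDim {V : Type*} (G : SimpleGraph V) : ℕ :=
  sInf {d : ℕ | ∃ I : Fin d → SimpleGraph V, (∀ i, IsThresholdGraph (I i)) ∧
    ∀ u v : V, G.Adj u v ↔ (u ≠ v ∧ ∀ i, (I i).Adj u v)}

def zeroDivisorGraph (R : Type*) [CommRing R] :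
    SimpleGraph {x : R // x ≠ 0 ∧ ∃ y : R, y ≠ 0 ∧ x * y = 0} :=
  SimpleGraph.fromRel (fun a b => (a : R) * (b : R) = 0)

/-!
Upper bound: `x y = 0` in `ZMod N` iff `p_i ^ n_i ∣ x y` for every `i`, and for each `i` this is a
threshold relation in the truncated valuations `min (v_{p_i} x) n_i`, hence an interval graph.

Lower bound: interval graphs have no induced `4`-cycle, so a box representation needs a separate
interval graph to delete each non-edge `{x_i, -x_i}` of a cocktail party graph. It remains to find
`x_1, …, x_a ∈ ZMod N` with `x_i x_j = 0` for `i ≠ j`, `x_i ^ 2 ≠ 0` and `-x_i ≠ x_i`. Such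
families add up along `ZMod (m k) ≃+* ZMod m × ZMod k`, and `1 ∈ ZMod (p ^ n)` is one when
`p ^ n > 2`. The only other prime power is a single factor `2`, and the hypothesis on `N` then
provides an odd `q ^ m ∣ N` with `m ≥ 3`, so that `q ^ (m - 1), 2 q` is such a family in
`ZMod (2 q ^ m)`.
-/

open Function

theorem Set.Icc_inter_Icc_nonempty_iff {α : Type*} [LinearOrder α] {a b c d : α} :
    (Icc a b ∩ Icc c d).Nonempty ↔ a ≤ b ∧ c ≤ d ∧ a ≤ d ∧ c ≤ b := by
  rw [Icc_inter_Icc, nonempty_Icc, max_le_iff, le_min_iff, le_min_iff]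
  tauto

theorem Nat.cast_le_add_iff_of_lt_one {m k : ℕ} {ε : ℝ} (h₀ : 0 ≤ ε) (h₁ : ε < 1) :
    (m : ℝ) ≤ k + ε ↔ m ≤ k := by
  refine ⟨fun h => ?_, fun h => le_add_of_le_of_nonneg (by exact_mod_cast h) h₀⟩
  have : (m : ℝ) < (k + 1 : ℕ) := by push_cast; linarith
  exact Nat.lt_succ_iff.mp (by exact_mod_cast this)

section IntervalGraph

variable {V : Type*} {H : SimpleGraph V}

theorem IsIntervalGraph.adj_or_adj_of_cycle4 (hH : IsIntervalGraph H) {x₁ y₁ x₂ y₂ : V}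
    (h₁ : x₁ ≠ y₁) (h₂ : x₂ ≠ y₂) (hx₁x₂ : H.Adj x₁ x₂) (hx₁y₂ : H.Adj x₁ y₂)
    (hy₁x₂ : H.Adj y₁ x₂) (hy₁y₂ : H.Adj y₁ y₂) : H.Adj x₁ y₁ ∨ H.Adj x₂ y₂ := by
  obtain ⟨A, B, hAB⟩ := hH
  have meet {u v : V} (h : H.Adj u v) := Set.Icc_inter_Icc_nonempty_iff.mp ((hAB u v h.ne).mp h)
  have := meet hx₁x₂; have := meet hx₁y₂; have := meet hy₁x₂; have := meet hy₁y₂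
  rw [hAB _ _ h₁, hAB _ _ h₂, Set.Icc_inter_Icc_nonempty_iff, Set.Icc_inter_Icc_nonempty_iff]
  -- if the intervals of `x₁` and `y₁` are disjoint, the right end of the left one lies in both
  -- intervals of `x₂` and `y₂`
  grind

theorem IsIntervalGraph.of_threshold_nat [Countable V] (w : V → ℕ) (S : ℕ)
    (hH : ∀ u v, u ≠ v → (H.Adj u v ↔ S ≤ w u + w v)) : IsIntervalGraph H := by
  obtain ⟨e, he⟩ := Countable.exists_injective_nat V
  set ε : V → ℝ := fun v => 1 / (e v + 2)
  have hε₀ (v : V) : 0 ≤ ε v := by positivity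
  have hε₁ (v : V) : ε v < 1 := by
    simp only [ε]; rw [div_lt_one (by positivity)]; linarith [(e v).cast_nonneg (α := ℝ)]
  have hε : Injective ε := fun u v h => he (by simpa [ε] using h)
  have key (u v : V) : (S : ℝ) - w u ≤ w v + ε v ↔ S ≤ w u + w v := by
    rw [sub_le_iff_le_add, add_comm, ← add_assoc, ← Nat.cast_add,
      Nat.cast_le_add_iff_of_lt_one (hε₀ v) (hε₁ v), add_comm]
  classical
  -- big vertices (`S ≤ 2 w v`) get `[S - w v, w v] ∋ S / 2`; small ones, which are pairwise
  -- non-adjacent, get the distinct points `w v + ε v`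
  refine ⟨fun v => if S ≤ 2 * w v then (S : ℝ) - w v else w v + ε v,
    fun v => if S ≤ 2 * w v then (w v : ℝ) else w v + ε v, fun u v huv => ?_⟩
  rw [hH u v huv, Set.Icc_inter_Icc_nonempty_iff]
  dsimp only
  have big_small {x y : V} (hx : S ≤ 2 * w x) (hy : ¬S ≤ 2 * w y) : (w y : ℝ) + ε y ≤ w x := by
    have : ((w y + 1 : ℕ) : ℝ) ≤ w x := Nat.cast_le.mpr (by omega)
    push_cast at this
    linarith [hε₁ y]
  split_ifs with hu hv hv
  · simp only [sub_le_iff_le_add, ← Nat.cast_add, Nat.cast_le]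
    omega
  · rw [key, sub_le_iff_le_add, ← Nat.cast_add, Nat.cast_le]
    simp only [le_refl, big_small hu hv, and_true, true_and]
    omega
  · rw [key, sub_le_iff_le_add, ← Nat.cast_add, Nat.cast_le]
    simp only [le_refl, big_small hv hu, true_and]
    omega
  · simp only [le_refl, true_and]
    refine ⟨fun h => by omega, fun ⟨h₁, h₂⟩ => (huv (hε ?_)).elim⟩
    have hle : w u ≤ w v :=
      (Nat.cast_le_add_iff_of_lt_one (hε₀ v) (hε₁ v)).mp (by linarith [hε₀ u])
    have hge : w v ≤ w u :=
      (Nat.cast_le_add_iff_of_lt_one (hε₀ u) (hε₁ u)).mp (by linarith [hε₀ v])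
    have : (w u : ℝ) = w v := by exact_mod_cast le_antisymm hle hge
    linarith

theorem Nat.pow_dvd_mul_iff_le_min_add_min {p n a b : ℕ} (hp : p.Prime) (ha : a ≠ 0)
    (hb : b ≠ 0) :
    p ^ n ∣ a * b ↔ n ≤ min (a.factorization p) n + min (b.factorization p) n := by
  rw [hp.pow_dvd_iff_le_factorization (mul_ne_zero ha hb), Nat.factorization_mul ha hb,
    Finsupp.add_apply]
  omega

theorem isIntervalGraph_fromRel_pow_dvd_mul [Countable V] {p : ℕ} (hp : p.Prime) (n : ℕ)
    (f : V → ℕ) (hf : ∀ v, f v ≠ 0) :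
    IsIntervalGraph (SimpleGraph.fromRel fun u v => p ^ n ∣ f u * f v) :=
  .of_threshold_nat (fun v => min ((f v).factorization p) n) n fun u v huv => by
    rw [SimpleGraph.fromRel_adj, mul_comm (f v), or_self,
      Nat.pow_dvd_mul_iff_le_min_add_min hp (hf u) (hf v)]
    exact and_iff_right huv

end IntervalGraph

section BoxRepresentation

variable {V : Type*}

def IsBoxRepresentation (G : SimpleGraph V) {d : ℕ} (I : Fin d → SimpleGraph V) : Prop :=
  (∀ i, IsIntervalGraph (I i)) ∧ ∀ u v, G.Adj u v ↔ u ≠ v ∧ ∀ i, (I i).Adj u v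

theorem boxicity_eq_of {G : SimpleGraph V} {d : ℕ}
    (hrep : ∃ I : Fin d → SimpleGraph V, IsBoxRepresentation G I)
    (hmin : ∀ (d' : ℕ) (I : Fin d' → SimpleGraph V), IsBoxRepresentation G I → d ≤ d') :
    boxicity G = d :=
  le_antisymm (Nat.sInf_le hrep) (le_csInf ⟨d, hrep⟩ fun d' ⟨I, hI⟩ => hmin d' I hI)

theorem IsBoxRepresentation.le_of_cocktailParty {G : SimpleGraph V} {a d : ℕ}
    {I : Fin d → SimpleGraph V} (hI : IsBoxRepresentation G I) (X Y : Fin a → V)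
    (hXY : ∀ i, X i ≠ Y i) (hnadj : ∀ i, ¬G.Adj (X i) (Y i))
    (hXX : Pairwise fun i j => G.Adj (X i) (X j)) (hXY' : Pairwise fun i j => G.Adj (X i) (Y j))
    (hYY : Pairwise fun i j => G.Adj (Y i) (Y j)) : a ≤ d := by
  by_contra! hd
  choose f hf using fun i => by simpa [hI.2, hXY i] using hnadj i
  obtain ⟨i, j, hij, hfij⟩ := Fintype.exists_ne_map_eq_of_card_lt f (by simpa using hd)
  have cross {u v : V} (h : G.Adj u v) : (I (f i)).Adj u v := ((hI.2 u v).mp h).2 (f i)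
  refine ((hI.1 (f i)).adj_or_adj_of_cycle4 (hXY i) (hXY j) (cross (hXX hij))
    (cross (hXY' hij)) (cross (hXY' hij.symm)).symm (cross (hYY hij))).elim (hf i) ?_
  rw [hfij]
  exact hf j

end BoxRepresentation

theorem zeroDivisorGraph_adj {R : Type*} [CommRing R]
    {u v : {x : R // x ≠ 0 ∧ ∃ y : R, y ≠ 0 ∧ x * y = 0}} :
    (zeroDivisorGraph R).Adj u v ↔ u ≠ v ∧ u.1 * v.1 = 0 := by
  simp [zeroDivisorGraph, mul_comm v.1]

theorem Nat.prod_dvd_iff_of_pairwise_coprime {ι : Type*} [Fintype ι] {f : ι → ℕ}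
    (hf : Pairwise (Nat.Coprime on f)) {m : ℕ} : ∏ i, f i ∣ m ↔ ∀ i, f i ∣ m := by
  refine ⟨fun h i => (Finset.dvd_prod_of_mem f (Finset.mem_univ i)).trans h, fun h => ?_⟩
  rw [← Int.natCast_dvd_natCast, Nat.cast_prod]
  exact Fintype.prod_dvd_of_coprime (fun i j hij => Nat.isCoprime_iff_coprime.mpr (hf hij))
    fun i => Int.natCast_dvd_natCast.mpr (h i)

theorem ZMod.mul_eq_zero_iff_dvd_val_mul {N : ℕ} [NeZero N] (x y : ZMod N) :
    x * y = 0 ↔ N ∣ x.val * y.val := by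
  rw [← ZMod.natCast_eq_zero_iff, Nat.cast_mul, ZMod.natCast_zmod_val, ZMod.natCast_zmod_val]

theorem exists_isBoxRepresentation_zeroDivisorGraph {a : ℕ} {p n : Fin a → ℕ}
    (hp : ∀ i, (p i).Prime) (hcop : Pairwise (Nat.Coprime on fun i => p i ^ n i)) :
    ∃ I : Fin a → SimpleGraph _,
      IsBoxRepresentation (zeroDivisorGraph (ZMod (∏ i, p i ^ n i))) I := by
  have : NeZero (∏ i, p i ^ n i) :=
    ⟨Finset.prod_ne_zero_iff.mpr fun i _ => pow_ne_zero _ (hp i).ne_zero⟩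
  refine ⟨fun i => .fromRel fun u v => p i ^ n i ∣ u.1.val * v.1.val, fun i =>
    isIntervalGraph_fromRel_pow_dvd_mul (hp i) _ _ fun v => (ZMod.val_ne_zero _).mpr v.2.1,
    fun u v => ?_⟩
  simp only [zeroDivisorGraph, SimpleGraph.fromRel_adj, mul_comm v.1.val, or_self,
    ZMod.mul_eq_zero_iff_dvd_val_mul, Nat.prod_dvd_iff_of_pairwise_coprime hcop]
  exact and_congr_right fun huv => forall_congr' fun i => (and_iff_right huv).symm

section CocktailFamily

variable {R S : Type*} [CommRing R] [CommRing S] {s t : ℕ}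

/-- The elements `± x i` span a cocktail party graph in the zero-divisor graph: `x i` and `-x i`
are distinct and non-adjacent, any other two of them are adjacent. -/
structure IsCocktailFamily (x : Fin s → R) : Prop where
  pairwise_mul_eq_zero : Pairwise fun i j => x i * x j = 0
  mul_self_ne_zero : ∀ i, x i * x i ≠ 0
  neg_ne_self : ∀ i, -x i ≠ x i

theorem IsCocktailFamily.le_of_isBoxRepresentation {x : Fin s → R} (hx : IsCocktailFamily x)
    (hs : 2 ≤ s) {d : ℕ} {I : Fin d → SimpleGraph _}
    (hI : IsBoxRepresentation (zeroDivisorGraph R) I) : s ≤ d := by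
  have : Nontrivial (Fin s) := Fin.nontrivial_iff_two_le.mpr hs
  choose partner hpartner using fun i : Fin s => exists_ne i
  have hne (i) : x i ≠ 0 := fun h => hx.mul_self_ne_zero i (by simp [h])
  have hann (i) : x i * x (partner i) = 0 := hx.pairwise_mul_eq_zero (hpartner i).symm
  have adj {u v : {x : R // x ≠ 0 ∧ ∃ y : R, y ≠ 0 ∧ x * y = 0}} (hu : u.1 * u.1 ≠ 0)
      (huv : u.1 * v.1 = 0) : (zeroDivisorGraph R).Adj u v :=
    zeroDivisorGraph_adj.mpr ⟨by rintro rfl; exact hu huv, huv⟩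
  refine hI.le_of_cocktailParty (fun i => ⟨x i, hne i, x (partner i), hne _, hann i⟩)
    (fun i => ⟨-x i, neg_ne_zero.mpr (hne i), x (partner i), hne _, by
      rw [neg_mul, hann, neg_zero]⟩)
    (fun i h => hx.neg_ne_self i (congrArg Subtype.val h).symm)
    (fun i h => hx.mul_self_ne_zero i <| neg_eq_zero.mp <| by
      rw [← mul_neg]; exact (zeroDivisorGraph_adj.mp h).2)
    (fun i j hij => adj (hx.mul_self_ne_zero i) (hx.pairwise_mul_eq_zero hij))
    (fun i j hij => adj (hx.mul_self_ne_zero i) <| by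
      rw [mul_neg, hx.pairwise_mul_eq_zero hij, neg_zero])
    (fun i j hij => adj (by rw [neg_mul_neg]; exact hx.mul_self_ne_zero i) <| by
      rw [neg_mul_neg]; exact hx.pairwise_mul_eq_zero hij)

theorem IsCocktailFamily.map {x : Fin s → R} (hx : IsCocktailFamily x) (e : R ≃+* S) :
    IsCocktailFamily fun i => e (x i) where
  pairwise_mul_eq_zero i j hij := by
    dsimp only; rw [← map_mul, hx.pairwise_mul_eq_zero hij, map_zero]
  mul_self_ne_zero i := by
    rw [← map_mul, EmbeddingLike.map_ne_zero_iff]; exact hx.mul_self_ne_zero i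
  neg_ne_self i := by rw [← map_neg, e.injective.ne_iff]; exact hx.neg_ne_self i

theorem IsCocktailFamily.comp {x : Fin s → R} (hx : IsCocktailFamily x) {f : Fin t → Fin s}
    (hf : Injective f) : IsCocktailFamily (x ∘ f) where
  pairwise_mul_eq_zero _ _ hij := hx.pairwise_mul_eq_zero (hf.ne hij)
  mul_self_ne_zero i := hx.mul_self_ne_zero (f i)
  neg_ne_self i := hx.neg_ne_self (f i)

theorem IsCocktailFamily.append {x : Fin s → R} {y : Fin t → S} (hx : IsCocktailFamily x)
    (hy : IsCocktailFamily y) :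
    IsCocktailFamily (Fin.append (fun i => (x i, (0 : S))) fun j => ((0 : R), y j)) where
  pairwise_mul_eq_zero i j hij := by
    cases i using Fin.addCases <;> cases j using Fin.addCases <;>
      simp only [ne_eq, Fin.append_left, Fin.append_right, Fin.castAdd_inj, Fin.natAdd_inj] at hij ⊢
    · simp [Prod.ext_iff, hx.pairwise_mul_eq_zero hij]
    · simp
    · simp
    · simp [Prod.ext_iff, hy.pairwise_mul_eq_zero hij]
  mul_self_ne_zero i := by
    cases i using Fin.addCases <;> simp [Prod.ext_iff, hx.mul_self_ne_zero, hy.mul_self_ne_zero]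
  neg_ne_self i := by
    cases i using Fin.addCases <;> simp [Prod.ext_iff, hx.neg_ne_self, hy.neg_ne_self]

theorem IsCocktailFamily.exists_zmod_mul {m k : ℕ} (h : m.Coprime k) {x : Fin s → ZMod m}
    {y : Fin t → ZMod k} (hx : IsCocktailFamily x) (hy : IsCocktailFamily y) :
    ∃ z : Fin (s + t) → ZMod (m * k), IsCocktailFamily z :=
  ⟨_, (hx.append hy).map (ZMod.chineseRemainder h).symm⟩

end CocktailFamily

theorem ZMod.natCast_ne_zero_of_pos_of_lt {k c : ℕ} (hc : 0 < c) (hck : c < k) :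
    (c : ZMod k) ≠ 0 := by
  rw [Ne, ZMod.natCast_eq_zero_iff]
  exact fun h => hc.ne' (Nat.eq_zero_of_dvd_of_lt h hck)

theorem isCocktailFamily_zmod_one {k : ℕ} (hk : 2 < k) :
    IsCocktailFamily fun _ : Fin 1 => (1 : ZMod k) where
  pairwise_mul_eq_zero i j hij := (hij (Subsingleton.elim i j)).elim
  mul_self_ne_zero _ := by
    rw [mul_one]; exact_mod_cast ZMod.natCast_ne_zero_of_pos_of_lt one_pos (by omega)
  neg_ne_self _ := by
    have : Fact (2 < k) := ⟨hk⟩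
    exact ZMod.neg_one_ne_one

theorem exists_isCocktailFamily_zmod_prod {ι : Type*} [DecidableEq ι] (s : Finset ι)
    (m : ι → ℕ) (hcop : (s : Set ι).Pairwise (Nat.Coprime on m)) (hm : ∀ i ∈ s, 2 < m i) :
    ∃ x : Fin s.card → ZMod (∏ i ∈ s, m i), IsCocktailFamily x := by
  induction s using Finset.induction_on with
  | empty => exact ⟨Fin.elim0, fun i => i.elim0, fun i => i.elim0, fun i => i.elim0⟩
  | insert j s hj ih =>
    obtain ⟨x, hx⟩ := ih (hcop.mono (by simp)) fun i hi => hm i (by simp [hi])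
    rw [Finset.prod_insert hj, Finset.card_insert_of_notMem hj, add_comm]
    refine (isCocktailFamily_zmod_one (hm j (by simp))).exists_zmod_mul ?_ hx
    exact Nat.Coprime.prod_right fun i hi =>
      hcop (by simp) (by simp [hi]) (by rintro rfl; exact hj hi)

theorem isCocktailFamily_zmod_two_mul_pow {q m : ℕ} (hq : Odd q) (hq1 : 1 < q) (hm : 3 ≤ m) :
    IsCocktailFamily ![((q ^ (m - 1) : ℕ) : ZMod (2 * q ^ m)), ((2 * q : ℕ) : ZMod _)] := by
  have hq3 : 3 ≤ q := by obtain ⟨r, rfl⟩ := hq; omega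
  have hqm : q ^ (m - 1) * q = q ^ m := pow_sub_one_mul (by omega) q
  have hq2 : q ^ 2 ≤ q ^ (m - 1) := Nat.pow_le_pow_right (by omega) (by omega)
  have hprod : 2 * q ^ m ∣ q ^ (m - 1) * (2 * q) := ⟨1, by rw [← hqm]; ring⟩
  refine ⟨fun i j hij => ?_, fun i => ?_, fun i => ?_⟩
  · fin_cases i <;> fin_cases j <;> simp only [ne_eq, not_true_eq_false] at hij <;>
      simp only [Fin.zero_eta, Fin.isValue, Matrix.cons_val_zero, Fin.mk_one,
        Matrix.cons_val_one, ← Nat.cast_mul, ZMod.natCast_eq_zero_iff, hprod, mul_comm (2 * q)]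
  all_goals fin_cases i <;>
    simp only [Fin.zero_eta, Fin.isValue, Matrix.cons_val_zero, Fin.mk_one, Matrix.cons_val_one,
      ne_eq, neg_eq_iff_add_eq_zero, ← Nat.cast_mul, ← Nat.cast_add]
  · exact fun h => (hq.pow.mul hq.pow).not_two_dvd_nat
      ((dvd_mul_right 2 _).trans ((ZMod.natCast_eq_zero_iff _ _).mp h))
  all_goals
    refine ZMod.natCast_ne_zero_of_pos_of_lt (by positivity) ?_
    nlinarith [Nat.mul_le_mul_right q hq2]

theorem Nat.Prime.pow_le_two_iff {p n : ℕ} (hp : p.Prime) (hn : n ≠ 0) :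
    p ^ n ≤ 2 ↔ p = 2 ∧ n = 1 := by
  refine ⟨fun h => ?_, by rintro ⟨rfl, rfl⟩; rfl⟩
  obtain rfl : p = 2 := le_antisymm ((Nat.le_self_pow hn p).trans h) hp.two_le
  refine ⟨rfl, by_contra fun hn1 => ?_⟩
  have : 2 ^ 2 ≤ 2 ^ n := Nat.pow_le_pow_right two_pos (by omega)
  omega

section PrimePowerProduct

variable {a : ℕ} {p n : Fin a → ℕ}

theorem pairwise_coprime_pow_of_injective (hp : ∀ i, (p i).Prime) (hinj : Injective p) :
    Pairwise (Nat.Coprime on fun i => p i ^ n i) :=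
  fun i j hij => Nat.coprime_pow_primes _ _ (hp i) (hp j) (hinj.ne hij)

theorem exists_isCocktailFamily_zmod_of_two_mul_pow (hp : ∀ i, (p i).Prime) (hinj : Injective p)
    (hn : ∀ i, 0 < n i) {i₂ k : Fin a} (hi₂ : p i₂ = 2) (hni₂ : n i₂ = 1) (hk : p k ≠ 2)
    (hnk : 3 ≤ n k) : ∃ x : Fin a → ZMod (∏ i, p i ^ n i), IsCocktailFamily x := by
  classical
  have hcop := pairwise_coprime_pow_of_injective (n := n) hp hinj
  have hki : k ≠ i₂ := fun h => hk (h ▸ hi₂)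
  set s := (Finset.univ.erase i₂).erase k
  have hN : ∏ i, p i ^ n i = 2 * p k ^ n k * ∏ i ∈ s, p i ^ n i := by
    rw [← Finset.mul_prod_erase _ _ (Finset.mem_univ i₂),
      ← Finset.mul_prod_erase _ _ (Finset.mem_erase.mpr ⟨hki, Finset.mem_univ k⟩), hi₂, hni₂]
    ring
  have hcard : 2 + s.card = a := by
    have := Finset.card_le_card (Finset.erase_subset k (Finset.univ.erase i₂))
    simp [s, Finset.card_erase_of_mem, hki] at this ⊢
    omega
  have hs (i) (hi : i ∈ s) : i ≠ i₂ ∧ i ≠ k := by simp_all [s]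
  obtain ⟨x, hx⟩ := exists_isCocktailFamily_zmod_prod s _ (hcop.set_pairwise _) fun i hi =>
    not_le.mp fun h => (hs i hi).1 <| hinj <|
      (((hp i).pow_le_two_iff (hn i).ne').mp h).1.trans hi₂.symm
  have hcop' : (2 * p k ^ n k).Coprime (∏ i ∈ s, p i ^ n i) := Nat.Coprime.prod_right fun i hi =>
    Nat.Coprime.mul_left (by simpa [hi₂, hni₂] using hcop (hs i hi).1.symm) (hcop (hs i hi).2.symm)
  obtain ⟨z, hz⟩ := (isCocktailFamily_zmod_two_mul_pow ((hp k).odd_of_ne_two hk) (hp k).one_lt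
    hnk).exists_zmod_mul hcop' hx
  rw [hN]
  exact ⟨z ∘ Fin.cast hcard.symm, hz.comp (Fin.cast_injective _)⟩

theorem exists_isCocktailFamily_zmod (hp : ∀ i, (p i).Prime) (hinj : Injective p)
    (hn : ∀ i, 0 < n i) (hmod : ¬ ((∏ i, p i ^ n i) % 4 = 2 ∧ ∀ i, p i ≠ 2 → n i ≤ 2)) :
    ∃ x : Fin a → ZMod (∏ i, p i ^ n i), IsCocktailFamily x := by
  classical
  by_cases hbig : ∀ i, 2 < p i ^ n i
  · obtain ⟨x, hx⟩ := exists_isCocktailFamily_zmod_prod Finset.univ _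
      ((pairwise_coprime_pow_of_injective hp hinj).set_pairwise _) fun i _ => hbig i
    exact ⟨x ∘ Fin.cast (by simp), hx.comp (Fin.cast_injective _)⟩
  obtain ⟨i₂, hi₂⟩ := not_forall.mp hbig
  obtain ⟨h2, h1⟩ := ((hp i₂).pow_le_two_iff (hn i₂).ne').mp (not_lt.mp hi₂)
  have hodd : Odd (∏ i ∈ Finset.univ.erase i₂, p i ^ n i) :=
    Finset.prod_induction _ Odd (fun _ _ => Odd.mul) odd_one fun i hi =>
      ((hp i).odd_of_ne_two fun h => (Finset.ne_of_mem_erase hi) (hinj (h.trans h2.symm))).pow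
  have hN4 : (∏ i, p i ^ n i) % 4 = 2 := by
    rw [← Finset.mul_prod_erase _ _ (Finset.mem_univ i₂), h2, h1]
    obtain ⟨r, hr⟩ := hodd
    omega
  obtain ⟨k, hk, hnk⟩ : ∃ k, p k ≠ 2 ∧ 2 < n k := by simpa [hN4] using hmod
  exact exists_isCocktailFamily_zmod_of_two_mul_pow hp hinj hn h2 h1 hk hnk

end PrimePowerProduct

theorem stmt_12 (N a : ℕ) (p n : Fin a → ℕ) (ha : 2 ≤ a)
    (hp : ∀ i, (p i).Prime) (hmono : StrictMono p) (hn : ∀ i, 0 < n i)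
    (hN : N = ∏ i, p i ^ n i)
    (hmod : ¬ (N % 4 = 2 ∧ ∀ i, p i ≠ 2 → n i ≤ 2)) :
    boxicity (zeroDivisorGraph (ZMod N)) = a := by
  subst hN
  obtain ⟨x, hx⟩ := exists_isCocktailFamily_zmod hp hmono.injective hn hmod
  refine boxicity_eq_of (exists_isBoxRepresentation_zeroDivisorGraph hp
    (pairwise_coprime_pow_of_injective hp hmono.injective)) fun _ _ hI => ?_
  exact hx.le_of_isBoxRepresentation ha hI
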